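/- arXiv:1801.08294 — 2 statements merged into one kernel-verified Lean document; each statement's English description precedes it below -/
import Mathlib

section
/- Suppose λ > 0 and w ∈ ℝ^K has all entries strictly positive with wᵀ B = λ wᵀ (a positive left eigenvector of B). Then for every feasible power vector P (P_k ≥ 0 for all k and ∑_k P_k ≤ P_T), the minimum achievable rate is bounded by min_{k} R_k(P) ≤ log₂(1 + 1/λ). -/
/-- Achievable rate of user `k` in downlink NOMA:
`R_k(P) = log₂(1 + P_k g_k / (g_k ∑_{j<k} P_j + 1))`
(for `k = 0`, i.e. user 1, the sum is empty and this is `log₂(1 + P_1 g_1)`). -/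
noncomputable def rate {K : ℕ} (g P : Fin K → ℝ) (k : Fin K) : ℝ :=
  Real.logb 2
    (1 + P k * g k / (g k * (∑ j ∈ Finset.univ.filter (fun j => j < k), P j) + 1))

/-- A power vector is feasible if it is entrywise nonnegative and respects the
total power budget. -/
def Feasible (K : ℕ) (P_T : ℝ) (P : Fin K → ℝ) : Prop :=
  (∀ k, 0 ≤ P k) ∧ ∑ k, P k ≤ P_T

/-- The minimum achievable rate among the `K` users. -/
noncomputable def minRate {K : ℕ} (g P : Fin K → ℝ) : ℝ :=
  ⨅ k, rate g P k

/-- The strictly lower-triangular all-ones matrix `A`, `A_{ik} = 1` iff `k < i`. -/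
def Amat (K : ℕ) : Matrix (Fin K) (Fin K) ℝ :=
  Matrix.of fun i k => if k < i then 1 else 0

/-- The vector `b` with entries `b_k = 1/(P_T g_k)`. -/
noncomputable def bvec (K : ℕ) (g : Fin K → ℝ) (P_T : ℝ) : Fin K → ℝ :=
  fun k => 1 / (P_T * g k)

/-- The matrix `B = A + b 𝟙ᵀ`, i.e. `B_{ik} = A_{ik} + b_i`. -/
noncomputable def Bmat (K : ℕ) (g : Fin K → ℝ) (P_T : ℝ) : Matrix (Fin K) (Fin K) ℝ :=
  Amat K + Matrix.of fun i _ => bvec K g P_T i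

/-!
If every user had rate above `log₂(1 + 1/λ)`, every SINR would exceed `1/λ`; together with the
power budget this says `(B P)_k < λ P_k` for all `k`. Pairing with the positive left eigenvector
`w` then gives `λ wᵀP = wᵀ B P < λ wᵀP`, a contradiction.
-/

open Finset Matrix

theorem Matrix.exists_smul_le_mulVec_of_vecMul_eq_smul {n R : Type*} [Fintype n] [Nonempty n]
    [Field R] [LinearOrder R] [IsStrictOrderedRing R]
    {M : Matrix n n R} {w : n → R} {lam : R} (hw : ∀ i, 0 < w i)
    (heig : w ᵥ* M = lam • w) (x : n → R) : ∃ k, lam * x k ≤ (M *ᵥ x) k := by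
  by_contra! h
  have hlt : w ⬝ᵥ (M *ᵥ x) < w ⬝ᵥ (lam • x) :=
    sum_lt_sum_of_nonempty univ_nonempty fun k _ => mul_lt_mul_of_pos_left (h k) (hw k)
  rw [dotProduct_mulVec, heig, smul_dotProduct, dotProduct_smul] at hlt
  exact lt_irrefl _ hlt

theorem Bmat_mulVec_apply (K : ℕ) (g P : Fin K → ℝ) (P_T : ℝ) (k : Fin K) :
    (Bmat K g P_T *ᵥ P) k =
      ∑ j ∈ univ.filter (fun j => j < k), P j + (∑ j, P j) / (P_T * g k) := by
  simp only [Bmat, Amat, bvec, mulVec, dotProduct, Matrix.add_apply, of_apply, add_mul,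
    sum_add_distrib, ite_mul, one_mul, zero_mul, sum_ite, sum_const_zero, add_zero, sum_div]
  congr 1
  exact sum_congr rfl fun j _ => by ring

theorem Bmat_mulVec_le {K : ℕ} {g P : Fin K → ℝ} {P_T : ℝ} {k : Fin K} (hg : 0 < g k)
    (hPT : 0 < P_T) (hbudget : ∑ j, P j ≤ P_T) :
    (Bmat K g P_T *ᵥ P) k ≤ ∑ j ∈ univ.filter (fun j => j < k), P j + 1 / g k := by
  rw [Bmat_mulVec_apply]
  gcongr _ + ?_
  calc (∑ j, P j) / (P_T * g k) ≤ P_T / (P_T * g k) := by gcongr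
    _ = 1 / g k := by field_simp

theorem rate_le_logb_one_add_inv {K : ℕ} {g P : Fin K → ℝ} {k : Fin K} {lam : ℝ}
    (hg : 0 < g k) (hP : ∀ j, 0 ≤ P j) (hlam : 0 < lam)
    (h : lam * P k ≤ ∑ j ∈ univ.filter (fun j => j < k), P j + 1 / g k) :
    rate g P k ≤ Real.logb 2 (1 + 1 / lam) := by
  set S := ∑ j ∈ univ.filter (fun j => j < k), P j
  have hS : 0 ≤ S := sum_nonneg fun j _ => hP j
  have hd : 0 < g k * S + 1 := by positivity
  have hsinr : P k * g k / (g k * S + 1) ≤ 1 / lam := by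
    rw [div_le_div_iff₀ hd hlam]
    have := mul_le_mul_of_nonneg_left h hg.le
    rw [mul_add, mul_one_div_cancel hg.ne'] at this
    linarith
  unfold rate
  exact Real.logb_le_logb_of_le one_lt_two (by have := hP k; positivity) (by linarith)

theorem minRate_le_rate {K : ℕ} (g P : Fin K → ℝ) (k : Fin K) : minRate g P ≤ rate g P k :=
  ciInf_le (Set.finite_range _).bddBelow k

theorem stmt_5_general (K : ℕ) (hK : 1 ≤ K) (g : Fin K → ℝ)
    (hgpos : ∀ k, 0 < g k)
    (P_T : ℝ) (hPT : 0 < P_T)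
    (lam : ℝ) (hlam : 0 < lam)
    (w : Fin K → ℝ) (hw : ∀ k, 0 < w k)
    (heig : Matrix.vecMul w (Bmat K g P_T) = lam • w) :
    ∀ P : Fin K → ℝ, Feasible K P_T P → minRate g P ≤ Real.logb 2 (1 + 1 / lam) := by
  rintro P ⟨hPnn, hbudget⟩
  have : Nonempty (Fin K) := ⟨⟨0, hK⟩⟩
  obtain ⟨k, hk⟩ := exists_smul_le_mulVec_of_vecMul_eq_smul hw heig P
  calc minRate g P ≤ rate g P k := minRate_le_rate g P k
    _ ≤ Real.logb 2 (1 + 1 / lam) := rate_le_logb_one_add_inv (hgpos k) hPnn hlam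
        (hk.trans (Bmat_mulVec_le (hgpos k) hPT hbudget))

theorem stmt_5 (K : ℕ) (hK : 1 ≤ K) (g : Fin K → ℝ)
    (hgpos : ∀ k, 0 < g k) (hgdec : StrictAnti g)
    (P_T : ℝ) (hPT : 0 < P_T)
    (lam : ℝ) (hlam : 0 < lam)
    (w : Fin K → ℝ) (hw : ∀ k, 0 < w k)
    (heig : Matrix.vecMul w (Bmat K g P_T) = lam • w) :
    ∀ P : Fin K → ℝ, Feasible K P_T P → minRate g P ≤ Real.logb 2 (1 + 1 / lam) :=
  stmt_5_general K hK g hgpos P_T hPT lam hlam w hw heig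
end

section
/- (Main theorem.) Suppose λ > 0, v ∈ ℝ^K has all entries strictly positive with B v = λ v, and w ∈ ℝ^K has all entries strictly positive with wᵀ B = λ wᵀ. Then P* = P_T · v / (𝟙ᵀv) is an optimal solution of the max-min fairness problem, and the optimal value (the fairness rate) equals R* = log₂(1 + 1/λ); that is, min_k R_k(P*) = log₂(1 + 1/λ) and min_k R_k(P) ≤ log₂(1 + 1/λ) for every feasible P. -/
lemma Bmat_mulVec (K : ℕ) (g : Fin K → ℝ) (P_T : ℝ) (x : Fin K → ℝ) (k : Fin K) :
    (Bmat K g P_T).mulVec x k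
      = (∑ j ∈ Finset.univ.filter (fun j => j < k), x j) + bvec K g P_T k * ∑ j, x j := by
  simp only [Bmat, Matrix.mulVec, dotProduct, Matrix.add_apply, Matrix.of_apply,
    Amat, add_mul, Finset.sum_add_distrib]
  congr 1
  · rw [Finset.sum_filter]
    exact Finset.sum_congr rfl fun j _ => by by_cases h : j < k <;> simp [h]
  · rw [Finset.mul_sum]

/-- Main theorem: if `λ > 0` admits a positive right eigenvector `v` and a positive
left eigenvector `w` of `B`, then `P* = P_T · v/(𝟙ᵀv)` solves the max-min fairness
problem and the fairness rate is `R* = log₂(1 + 1/λ)`. -/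
theorem stmt_6 (K : ℕ) (hK : 1 ≤ K) (g : Fin K → ℝ)
    (hgpos : ∀ k, 0 < g k) (hgdec : StrictAnti g)
    (P_T : ℝ) (hPT : 0 < P_T)
    (lam : ℝ) (hlam : 0 < lam)
    (v : Fin K → ℝ) (hv : ∀ k, 0 < v k)
    (heigv : (Bmat K g P_T).mulVec v = lam • v)
    (w : Fin K → ℝ) (hw : ∀ k, 0 < w k)
    (heigw : Matrix.vecMul w (Bmat K g P_T) = lam • w) :
    Feasible K P_T (fun k => P_T * v k / (∑ j, v j)) ∧
      minRate g (fun k => P_T * v k / (∑ j, v j)) = Real.logb 2 (1 + 1 / lam) ∧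
      ∀ P : Fin K → ℝ, Feasible K P_T P → minRate g P ≤ Real.logb 2 (1 + 1 / lam) := by
  haveI : Nonempty (Fin K) := Fin.pos_iff_nonempty.mp hK
  have hS : 0 < ∑ j, v j := Finset.sum_pos (fun j _ => hv j) Finset.univ_nonempty
  set S := ∑ j, v j with hSdef
  have hEig : ∀ k, (∑ j ∈ Finset.univ.filter (fun j => j < k), v j)
      + 1 / (P_T * g k) * S = lam * v k := by
    intro k
    have h := congrFun heigv k
    rw [Bmat_mulVec] at h
    simpa [bvec, smul_eq_mul] using h
  have hsumP : ∑ k, P_T * v k / S = P_T := by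
    rw [← Finset.sum_div, ← Finset.mul_sum, ← hSdef, mul_div_assoc,
      div_self hS.ne', mul_one]
  refine ⟨⟨fun k => div_nonneg (mul_nonneg hPT.le (hv k).le) hS.le, le_of_eq hsumP⟩, ?_, ?_⟩
  · have hrate : ∀ k, rate g (fun k => P_T * v k / S) k = Real.logb 2 (1 + 1 / lam) := by
      intro k
      set T := ∑ j ∈ Finset.univ.filter (fun j => j < k), v j with hTdef
      have hT : 0 ≤ T := Finset.sum_nonneg fun j _ => (hv j).le
      unfold rate
      congr 1
      have hsum : ∑ j ∈ Finset.univ.filter (fun j => j < k), P_T * v j / S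
          = P_T * T / S := by rw [hTdef, Finset.mul_sum, Finset.sum_div]
      rw [hsum]
      have h1 : 0 ≤ P_T * T / S := div_nonneg (mul_nonneg hPT.le hT) hS.le
      have hD : 0 < g k * (P_T * T / S) + 1 := by
        have := mul_nonneg (hgpos k).le h1; linarith
      have hnum : P_T * v k / S * g k = (g k * (P_T * T / S) + 1) / lam := by
        have h := hEig k
        have hg := hgpos k
        field_simp at h ⊢
        nlinarith [h, hS, hPT, hg, hlam]
      rw [hnum, div_right_comm, div_self hD.ne']
    unfold minRate
    rw [iInf_congr hrate, ciInf_const]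
  · rintro P ⟨hPnn, hPsum⟩
    have key : ∃ k, lam * P k ≤ (∑ j ∈ Finset.univ.filter (fun j => j < k), P j) + 1 / g k := by
      by_contra h
      push_neg at h
      have h2 : ∀ k, (Bmat K g P_T).mulVec P k < lam * P k := by
        intro k
        rw [Bmat_mulVec]
        have hb : bvec K g P_T k * ∑ j, P j ≤ 1 / g k := by
          rw [bvec]
          rw [div_mul_eq_mul_div, one_mul,
            div_le_div_iff₀ (mul_pos hPT (hgpos k)) (hgpos k)]
          nlinarith [hgpos k, hPsum]
        linarith [h k]
      have hlt : ∑ k, w k * (Bmat K g P_T).mulVec P k < ∑ k, w k * (lam * P k) :=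
        Finset.sum_lt_sum_of_nonempty Finset.univ_nonempty
          (fun k _ => mul_lt_mul_of_pos_left (h2 k) (hw k))
      have heq : ∑ k, w k * (Bmat K g P_T).mulVec P k = ∑ k, w k * (lam * P k) := by
        have h : dotProduct (Matrix.vecMul w (Bmat K g P_T)) P
            = dotProduct (lam • w) P := by rw [heigw]
        rw [← Matrix.dotProduct_mulVec] at h
        simp only [dotProduct, Pi.smul_apply, smul_eq_mul] at h
        rw [h]
        exact Finset.sum_congr rfl fun k _ => by ring
      linarith
    obtain ⟨k, hk⟩ := key
    set T := ∑ j ∈ Finset.univ.filter (fun j => j < k), P j with hTdef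
    have hT : 0 ≤ T := Finset.sum_nonneg fun j _ => hPnn j
    have hD : 0 < g k * T + 1 := by
      have := mul_nonneg (hgpos k).le hT; linarith
    have hratio : P k * g k / (g k * T + 1) ≤ 1 / lam := by
      rw [div_le_div_iff₀ hD hlam]
      have hg1 : 1 / g k * g k = 1 := one_div_mul_cancel (hgpos k).ne'
      nlinarith [mul_le_mul_of_nonneg_right hk (hgpos k).le, hg1]
    have hx : (0:ℝ) < 1 + P k * g k / (g k * T + 1) := by
      have := div_nonneg (mul_nonneg (hPnn k) (hgpos k).le) hD.le; linarith
    have hratek : rate g P k ≤ Real.logb 2 (1 + 1 / lam) := by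
      unfold rate
      rw [← hTdef]
      exact Real.logb_le_logb_of_le (by norm_num) hx (by linarith)
    calc minRate g P ≤ rate g P k :=
          ciInf_le (Set.Finite.bddBelow (Set.finite_range _)) k
      _ ≤ _ := hratek
end
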